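/- arXiv:1505.02308 — 5 statements merged into one kernel-verified Lean document; each statement's English description precedes it below -/
import Mathlib

section
/- Let b_m denote the number of permutations of [m] all of whose peaks and valleys are even. Then for all n ≥ 0, b_{2n+1} = (2n+1)·b_{2n}. -/
/-- Position `i` (1-indexed, `2 ≤ i ≤ n-1`) is a peak of `π`: `π(i-1) < π(i) > π(i+1)`. -/
def IsPeak {n : ℕ} (π : Equiv.Perm (Fin n)) (i : ℕ) : Prop :=
  ∃ h : 2 ≤ i ∧ i + 1 ≤ n,
    π ⟨i - 2, by omega⟩ < π ⟨i - 1, by omega⟩ ∧ π ⟨i, by omega⟩ < π ⟨i - 1, by omega⟩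

/-- Position `i` (1-indexed, `2 ≤ i ≤ n-1`) is a valley of `π`: `π(i-1) > π(i) < π(i+1)`. -/
def IsValley {n : ℕ} (π : Equiv.Perm (Fin n)) (i : ℕ) : Prop :=
  ∃ h : 2 ≤ i ∧ i + 1 ≤ n,
    π ⟨i - 1, by omega⟩ < π ⟨i - 2, by omega⟩ ∧ π ⟨i - 1, by omega⟩ < π ⟨i, by omega⟩

/-- `b m` is the number of permutations of `[m]` with all peaks and valleys even. -/
noncomputable def evenPV (m : ℕ) : ℕ :=
  Nat.card {π : Equiv.Perm (Fin m) //
    (∀ i, IsPeak π i → Even i) ∧ (∀ i, IsValley π i → Even i)}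


/-!
A permutation of `[m+1]` is determined by its last value `v` and the standardization `σ ∈ S_m` of
its first `m` letters. Standardization keeps relative order, so the peaks and valleys at positions
`≤ m - 1` are those of `σ`; the only new one can sit at position `m`, which is even when `m` is.
-/

open Equiv

/-- The permutation of `[m+1]` whose word is `σ(1) ⋯ σ(m)` with the values `≥ v` shifted up by
one, followed by `v`. -/
def insertLast {m : ℕ} (σ : Perm (Fin m)) (v : Fin (m + 1)) : Perm (Fin (m + 1)) :=
  finSuccEquivLast.trans (σ.optionCongr.trans (finSuccEquiv' v).symm)

@[simp]
lemma insertLast_castSucc {m : ℕ} (σ : Perm (Fin m)) (v : Fin (m + 1)) (j : Fin m) :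
    insertLast σ v j.castSucc = v.succAbove (σ j) := by
  simp [insertLast]

@[simp]
lemma insertLast_last {m : ℕ} (σ : Perm (Fin m)) (v : Fin (m + 1)) :
    insertLast σ v (Fin.last m) = v := by
  simp [insertLast]

lemma insertLast_injective {m : ℕ} :
    Function.Injective (fun p : Perm (Fin m) × Fin (m + 1) => insertLast p.1 p.2) := by
  rintro ⟨σ, v⟩ ⟨σ', v'⟩ h
  have hv : v = v' := by simpa using congr($h (Fin.last m))
  subst hv
  have hσ : σ = σ' := by
    ext j
    have := congr($h j.castSucc)
    simp only [insertLast_castSucc] at this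
    rw [Fin.succAbove_right_injective this]
  rw [hσ]

lemma insertLast_bijective {m : ℕ} :
    Function.Bijective (fun p : Perm (Fin m) × Fin (m + 1) => insertLast p.1 p.2) :=
  (Nat.bijective_iff_injective_and_card _).2
    ⟨insertLast_injective, by simp [Fintype.card_perm, Nat.factorial_succ, mul_comm]⟩

lemma insertLast_lt_insertLast_iff {m : ℕ} (σ : Perm (Fin m)) (v : Fin (m + 1)) (j k : Fin m) :
    insertLast σ v j.castSucc < insertLast σ v k.castSucc ↔ σ j < σ k := by
  simp

section PeaksAndValleys

variable {m : ℕ} {π : Perm (Fin (m + 1))} {σ : Perm (Fin m)}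

lemma isPeak_iff_of_castSucc_lt_iff (h : ∀ j k, π j.castSucc < π k.castSucc ↔ σ j < σ k)
    {i : ℕ} (hi : i + 1 ≤ m) : IsPeak π i ↔ IsPeak σ i := by
  constructor
  · rintro ⟨⟨h2, _⟩, hl, hr⟩
    exact ⟨⟨h2, hi⟩, (h ⟨i - 2, by omega⟩ ⟨i - 1, by omega⟩).1 hl,
      (h ⟨i, by omega⟩ ⟨i - 1, by omega⟩).1 hr⟩
  · rintro ⟨⟨h2, _⟩, hl, hr⟩
    exact ⟨⟨h2, by omega⟩, (h ⟨i - 2, by omega⟩ ⟨i - 1, by omega⟩).2 hl,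
      (h ⟨i, by omega⟩ ⟨i - 1, by omega⟩).2 hr⟩

lemma isValley_iff_of_castSucc_lt_iff (h : ∀ j k, π j.castSucc < π k.castSucc ↔ σ j < σ k)
    {i : ℕ} (hi : i + 1 ≤ m) : IsValley π i ↔ IsValley σ i := by
  constructor
  · rintro ⟨⟨h2, _⟩, hl, hr⟩
    exact ⟨⟨h2, hi⟩, (h ⟨i - 1, by omega⟩ ⟨i - 2, by omega⟩).1 hl,
      (h ⟨i - 1, by omega⟩ ⟨i, by omega⟩).1 hr⟩
  · rintro ⟨⟨h2, _⟩, hl, hr⟩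
    exact ⟨⟨h2, by omega⟩, (h ⟨i - 1, by omega⟩ ⟨i - 2, by omega⟩).2 hl,
      (h ⟨i - 1, by omega⟩ ⟨i, by omega⟩).2 hr⟩

end PeaksAndValleys

def PeaksValleysEven {m : ℕ} (π : Perm (Fin m)) : Prop :=
  (∀ i, IsPeak π i → Even i) ∧ (∀ i, IsValley π i → Even i)

lemma peaksValleysEven_insertLast_iff {m : ℕ} (hm : Even m) (σ : Perm (Fin m))
    (v : Fin (m + 1)) : PeaksValleysEven (insertLast σ v) ↔ PeaksValleysEven σ := by
  have hlt := insertLast_lt_insertLast_iff σ v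
  constructor
  · rintro ⟨hpeak, hvalley⟩
    refine ⟨fun i hi => hpeak i ?_, fun i hi => hvalley i ?_⟩
    · exact (isPeak_iff_of_castSucc_lt_iff hlt hi.1.2).2 hi
    · exact (isValley_iff_of_castSucc_lt_iff hlt hi.1.2).2 hi
  · rintro ⟨hpeak, hvalley⟩
    refine ⟨fun i hi => ?_, fun i hi => ?_⟩
    · rcases (show i + 1 ≤ m ∨ i = m by have := hi.1.2; omega) with him | rfl
      · exact hpeak i ((isPeak_iff_of_castSucc_lt_iff hlt him).1 hi)
      · exact hm
    · rcases (show i + 1 ≤ m ∨ i = m by have := hi.1.2; omega) with him | rfl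
      · exact hvalley i ((isValley_iff_of_castSucc_lt_iff hlt him).1 hi)
      · exact hm

lemma evenPV_succ_of_even {m : ℕ} (hm : Even m) : evenPV (m + 1) = (m + 1) * evenPV m := by
  let e := Equiv.ofBijective _ (insertLast_bijective (m := m))
  calc evenPV (m + 1)
      = Nat.card {p : Perm (Fin m) × Fin (m + 1) // PeaksValleysEven p.1} :=
        Nat.card_congr (e.subtypeEquiv fun p =>
          (peaksValleysEven_insertLast_iff hm p.1 p.2).symm).symm
    _ = Nat.card ({σ : Perm (Fin m) // PeaksValleysEven σ} × Fin (m + 1)) :=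
        Nat.card_congr prodSubtypeFstEquivSubtypeProd
    _ = (m + 1) * evenPV m := by rw [Nat.card_prod, Nat.card_fin, mul_comm]; rfl

theorem stmt4 (n : ℕ) : evenPV (2 * n + 1) = (2 * n + 1) * evenPV (2 * n) :=
  evenPV_succ_of_even (even_two_mul n)
end

section
/- Let c_m denote the number of permutations of [m] all of whose peaks and valleys are odd. Then for all n ≥ 1, c_{2n} = 2n·c_{2n−1}. -/
/-- `c m` is the number of permutations of `[m]` with all peaks and valleys odd. -/
noncomputable def oddPV (m : ℕ) : ℕ :=
  Nat.card {π : Equiv.Perm (Fin m) //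
    (∀ i, IsPeak π i → Odd i) ∧ (∀ i, IsValley π i → Odd i)}

/-!
A permutation of `[m+1]` is determined by its last value `k` and by the relative order `σ` of
its first `m` values, and every pair `(k, σ)` occurs. Both permutations have the same peaks and
valleys at positions `2, …, m-1`, since these only depend on that relative order; the one
further candidate, position `m`, is odd when `m` is. So for odd `m` every permutation of `[m]`
with odd peaks and valleys extends in exactly `m + 1` ways, and `c_{m+1} = (m+1) c_m`.
-/

def PeaksValleysOdd {n : ℕ} (π : Equiv.Perm (Fin n)) : Prop :=
  (∀ i, IsPeak π i → Odd i) ∧ (∀ i, IsValley π i → Odd i)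

lemma oddPV_eq_card (m : ℕ) :
    oddPV m = Nat.card {π : Equiv.Perm (Fin m) // PeaksValleysOdd π} :=
  rfl

section PatternTransfer

variable {m : ℕ} {π : Equiv.Perm (Fin (m + 1))} {σ : Equiv.Perm (Fin m)}

lemma isPeak_iff_of_castSucc_lt_iff_s5
    (hπσ : ∀ a b : Fin m, π a.castSucc < π b.castSucc ↔ σ a < σ b) {i : ℕ} (hi : i + 1 ≤ m) :
    IsPeak π i ↔ IsPeak σ i := by
  constructor
  · rintro ⟨⟨h2, _⟩, hl, hr⟩
    exact ⟨⟨h2, hi⟩, (hπσ ⟨i - 2, by omega⟩ ⟨i - 1, by omega⟩).mp hl,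
      (hπσ ⟨i, by omega⟩ ⟨i - 1, by omega⟩).mp hr⟩
  · rintro ⟨⟨h2, _⟩, hl, hr⟩
    exact ⟨⟨h2, by omega⟩, (hπσ ⟨i - 2, by omega⟩ ⟨i - 1, by omega⟩).mpr hl,
      (hπσ ⟨i, by omega⟩ ⟨i - 1, by omega⟩).mpr hr⟩

lemma isValley_iff_of_castSucc_lt_iff_s5
    (hπσ : ∀ a b : Fin m, π a.castSucc < π b.castSucc ↔ σ a < σ b) {i : ℕ} (hi : i + 1 ≤ m) :
    IsValley π i ↔ IsValley σ i := by
  constructor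
  · rintro ⟨⟨h2, _⟩, hl, hr⟩
    exact ⟨⟨h2, hi⟩, (hπσ ⟨i - 1, by omega⟩ ⟨i - 2, by omega⟩).mp hl,
      (hπσ ⟨i - 1, by omega⟩ ⟨i, by omega⟩).mp hr⟩
  · rintro ⟨⟨h2, _⟩, hl, hr⟩
    exact ⟨⟨h2, by omega⟩, (hπσ ⟨i - 1, by omega⟩ ⟨i - 2, by omega⟩).mpr hl,
      (hπσ ⟨i - 1, by omega⟩ ⟨i, by omega⟩).mpr hr⟩

lemma peaksValleysOdd_iff_of_castSucc_lt_iff (hm : Odd m)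
    (hπσ : ∀ a b : Fin m, π a.castSucc < π b.castSucc ↔ σ a < σ b) :
    PeaksValleysOdd π ↔ PeaksValleysOdd σ := by
  have odd_of_le {i : ℕ} (hi : i + 1 ≤ m + 1) (h : i + 1 ≤ m → Odd i) : Odd i := by
    rcases Nat.lt_or_ge i m with hlt | hge
    · exact h hlt
    · exact (show i = m by omega) ▸ hm
  constructor
  · rintro ⟨hpeak, hvalley⟩
    exact ⟨fun i hi => hpeak i ((isPeak_iff_of_castSucc_lt_iff_s5 hπσ hi.1.2).mpr hi),
      fun i hi => hvalley i ((isValley_iff_of_castSucc_lt_iff_s5 hπσ hi.1.2).mpr hi)⟩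
  · rintro ⟨hpeak, hvalley⟩
    exact ⟨fun i hi => odd_of_le hi.1.2 fun h => hpeak i
        ((isPeak_iff_of_castSucc_lt_iff_s5 hπσ h).mp hi),
      fun i hi => odd_of_le hi.1.2 fun h => hvalley i
        ((isValley_iff_of_castSucc_lt_iff_s5 hπσ h).mp hi)⟩

end PatternTransfer

/-- The permutation of `Fin (m + 1)` whose first `m` values are in the relative order given by
`σ` and whose last value is `k`. -/
def permWithLast {m : ℕ} (σ : Equiv.Perm (Fin m)) (k : Fin (m + 1)) :
    Equiv.Perm (Fin (m + 1)) :=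
  finSuccEquivLast.trans (σ.optionCongr.trans (finSuccEquiv' k).symm)

section PermWithLast

variable {m : ℕ} (σ : Equiv.Perm (Fin m)) (k : Fin (m + 1))

@[simp] lemma permWithLast_last : permWithLast σ k (Fin.last m) = k := by
  simp [permWithLast]

@[simp] lemma permWithLast_castSucc (j : Fin m) :
    permWithLast σ k j.castSucc = k.succAbove (σ j) := by
  simp [permWithLast, finSuccEquiv'_symm_some]

lemma permWithLast_castSucc_lt_iff (a b : Fin m) :
    permWithLast σ k a.castSucc < permWithLast σ k b.castSucc ↔ σ a < σ b := by
  simp only [permWithLast_castSucc, Fin.succAbove_lt_succAbove_iff]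

end PermWithLast

lemma permWithLast_injective {m : ℕ} :
    Function.Injective (Function.uncurry (@permWithLast m)) := by
  rintro ⟨σ, k⟩ ⟨σ', k'⟩ h
  have hk : k = k' := by simpa using congrArg (· (Fin.last m)) h
  subst hk
  have hσ : σ = σ' := Equiv.ext fun j => by simpa using congrArg (· j.castSucc) h
  rw [hσ]

lemma permWithLast_bijective {m : ℕ} :
    Function.Bijective (Function.uncurry (@permWithLast m)) := by
  refine (Fintype.bijective_iff_injective_and_card _).mpr ⟨permWithLast_injective, ?_⟩
  simp only [Fintype.card_prod, Fintype.card_perm, Fintype.card_fin, Nat.factorial_succ, mul_comm]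

lemma oddPV_succ {m : ℕ} (hm : Odd m) : oddPV (m + 1) = (m + 1) * oddPV m := by
  have e : {p : Equiv.Perm (Fin m) × Fin (m + 1) // PeaksValleysOdd p.1} ≃
      {π : Equiv.Perm (Fin (m + 1)) // PeaksValleysOdd π} :=
    (Equiv.ofBijective _ permWithLast_bijective).subtypeEquiv fun p =>
      (peaksValleysOdd_iff_of_castSucc_lt_iff hm (permWithLast_castSucc_lt_iff p.1 p.2)).symm
  rw [oddPV_eq_card, oddPV_eq_card, ← Nat.card_congr e,
    Nat.card_congr Equiv.prodSubtypeFstEquivSubtypeProd, Nat.card_prod, Nat.card_fin, mul_comm]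

theorem stmt5 (n : ℕ) (hn : 1 ≤ n) : oddPV (2 * n) = 2 * n * oddPV (2 * n - 1) := by
  obtain ⟨m, rfl⟩ := Nat.exists_eq_add_of_le' hn
  have hsucc : 2 * (m + 1) = 2 * m + 1 + 1 := by ring
  rw [hsucc, Nat.add_sub_cancel]
  exact oddPV_succ (odd_two_mul_add_one m)
end

section
/- For all n ≥ 1, the number of permutations of [2n+1] with all peaks and valleys odd is strictly less than the number of permutations of [2n+1] with all peaks and valleys even. -/
open Equiv

theorem isPeak_add_two_iff {n : ℕ} (π : Perm (Fin n)) (j : ℕ) :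
    IsPeak π (j + 2) ↔ ∃ h : j + 2 < n,
      π ⟨j, by omega⟩ < π ⟨j + 1, by omega⟩ ∧ π ⟨j + 2, h⟩ < π ⟨j + 1, by omega⟩ :=
  ⟨fun ⟨_, hl, hr⟩ ↦ ⟨by omega, hl, hr⟩, fun ⟨_, hl, hr⟩ ↦ ⟨by omega, hl, hr⟩⟩

theorem isValley_add_two_iff {n : ℕ} (π : Perm (Fin n)) (j : ℕ) :
    IsValley π (j + 2) ↔ ∃ h : j + 2 < n,
      π ⟨j + 1, by omega⟩ < π ⟨j, by omega⟩ ∧ π ⟨j + 1, by omega⟩ < π ⟨j + 2, h⟩ :=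
  ⟨fun ⟨_, hl, hr⟩ ↦ ⟨by omega, hl, hr⟩, fun ⟨_, hl, hr⟩ ↦ ⟨by omega, hl, hr⟩⟩

theorem not_isPeak_one {n i : ℕ} : ¬IsPeak (1 : Perm (Fin n)) i := by
  rintro ⟨_, -, h⟩
  simp only [Perm.coe_one, id_eq, Fin.mk_lt_mk] at h
  omega

theorem not_isValley_one {n i : ℕ} : ¬IsValley (1 : Perm (Fin n)) i := by
  rintro ⟨_, h, -⟩
  simp only [Perm.coe_one, id_eq, Fin.mk_lt_mk] at h
  omega

theorem Equiv.Perm.mul_finRotate_apply_of_lt {m : ℕ} (π : Perm (Fin (m + 1))) {j : ℕ}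
    (h : j < m) : (π * finRotate (m + 1)) ⟨j, by omega⟩ = π ⟨j + 1, by omega⟩ := by
  rw [Perm.mul_apply, finRotate_of_lt h]

theorem IsPeak.of_mul_finRotate {m : ℕ} {π : Perm (Fin (m + 1))} {i : ℕ} (hi : i < m)
    (h : IsPeak (π * finRotate (m + 1)) i) : IsPeak π (i + 1) := by
  obtain ⟨j, rfl⟩ : ∃ j, i = j + 2 := ⟨i - 2, by obtain ⟨⟨_, _⟩, _⟩ := h; omega⟩
  obtain ⟨_, hl, hr⟩ := (isPeak_add_two_iff _ j).1 h
  simp (disch := omega) only [Perm.mul_finRotate_apply_of_lt] at hl hr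
  exact (isPeak_add_two_iff π (j + 1)).2 ⟨by omega, hl, hr⟩

theorem IsValley.of_mul_finRotate {m : ℕ} {π : Perm (Fin (m + 1))} {i : ℕ} (hi : i < m)
    (h : IsValley (π * finRotate (m + 1)) i) : IsValley π (i + 1) := by
  obtain ⟨j, rfl⟩ : ∃ j, i = j + 2 := ⟨i - 2, by obtain ⟨⟨_, _⟩, _⟩ := h; omega⟩
  obtain ⟨_, hl, hr⟩ := (isValley_add_two_iff _ j).1 h
  simp (disch := omega) only [Perm.mul_finRotate_apply_of_lt] at hl hr
  exact (isValley_add_two_iff π (j + 1)).2 ⟨by omega, hl, hr⟩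

theorem isValley_finRotate_inv_two {m : ℕ} (hm : 2 ≤ m) : IsValley (finRotate (m + 1))⁻¹ 2 := by
  have h0 : (finRotate (m + 1))⁻¹ ⟨0, by omega⟩ = ⟨m, by omega⟩ :=
    Perm.inv_eq_iff_eq.2 finRotate_last'.symm
  have h1 : (finRotate (m + 1))⁻¹ ⟨1, by omega⟩ = ⟨0, by omega⟩ :=
    Perm.inv_eq_iff_eq.2 (finRotate_of_lt (by omega)).symm
  have h2 : (finRotate (m + 1))⁻¹ ⟨2, by omega⟩ = ⟨1, by omega⟩ :=
    Perm.inv_eq_iff_eq.2 (finRotate_of_lt (by omega)).symm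
  refine ⟨⟨le_rfl, by omega⟩, ?_, ?_⟩ <;>
    simp only [Nat.reduceSub, h0, h1, h2, Fin.mk_lt_mk] <;> omega

def PeaksAndValleysSatisfy (p : ℕ → Prop) {n : ℕ} (π : Perm (Fin n)) : Prop :=
  (∀ i, IsPeak π i → p i) ∧ (∀ i, IsValley π i → p i)

namespace PeaksAndValleysSatisfy

variable {p q : ℕ → Prop}

theorem one (p : ℕ → Prop) (n : ℕ) : PeaksAndValleysSatisfy p (1 : Perm (Fin n)) :=
  ⟨fun _ h ↦ (not_isPeak_one h).elim, fun _ h ↦ (not_isValley_one h).elim⟩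

theorem mono {n : ℕ} {π : Perm (Fin n)} (h : PeaksAndValleysSatisfy p π)
    (hpq : ∀ i, p i → q i) : PeaksAndValleysSatisfy q π :=
  ⟨fun i hi ↦ hpq i (h.1 i hi), fun i hi ↦ hpq i (h.2 i hi)⟩

theorem mul_finRotate {m : ℕ} {π : Perm (Fin (m + 1))} (h : PeaksAndValleysSatisfy p π) :
    PeaksAndValleysSatisfy (fun i ↦ i = m ∨ p (i + 1)) (π * finRotate (m + 1)) := by
  refine ⟨fun i hi ↦ ?_, fun i hi ↦ ?_⟩
  · rcases (show i = m ∨ i < m by obtain ⟨⟨_, _⟩, _⟩ := hi; omega) with rfl | hlt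
    exacts [.inl rfl, .inr (h.1 _ (hi.of_mul_finRotate hlt))]
  · rcases (show i = m ∨ i < m by obtain ⟨⟨_, _⟩, _⟩ := hi; omega) with rfl | hlt
    exacts [.inl rfl, .inr (h.2 _ (hi.of_mul_finRotate hlt))]

end PeaksAndValleysSatisfy

theorem stmt6 (n : ℕ) (hn : 1 ≤ n) :
    Nat.card {π : Equiv.Perm (Fin (2 * n + 1)) //
        (∀ i, IsPeak π i → Odd i) ∧ (∀ i, IsValley π i → Odd i)} <
    Nat.card {π : Equiv.Perm (Fin (2 * n + 1)) //
        (∀ i, IsPeak π i → Even i) ∧ (∀ i, IsValley π i → Even i)} := by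
  classical
  let rotate : {π : Perm (Fin (2 * n + 1)) // PeaksAndValleysSatisfy Odd π} →
      {π : Perm (Fin (2 * n + 1)) // PeaksAndValleysSatisfy Even π} := fun π ↦
    ⟨π.1 * finRotate _, π.2.mul_finRotate.mono fun i ↦ by
      rintro (rfl | h)
      exacts [even_two_mul n, Nat.not_odd_iff_even.1 (Nat.odd_add_one.1 h)]⟩
  have rotate_injective : Function.Injective rotate := fun π σ h ↦
    Subtype.ext (mul_right_cancel (congrArg Subtype.val h))
  have one_notMem : ⟨1, .one Even _⟩ ∉ Set.range rotate := by
    rintro ⟨π, hπ⟩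
    have hπ_inv : π.1 = (finRotate _)⁻¹ := mul_eq_one_iff_eq_inv.1 (congrArg Subtype.val hπ)
    have := π.2.2 2 (hπ_inv ▸ isValley_finRotate_inv_two (by omega))
    exact Nat.not_odd_iff_even.2 even_two this
  simp only [Nat.card_eq_fintype_card]
  exact Fintype.card_lt_of_injective_of_notMem rotate rotate_injective one_notMem
end

section
/- For all n ≥ 4, the number of permutations of [n] with all peaks and valleys even is strictly less than the number of permutations of [n] with all peaks odd and all valleys even. -/
/-!
Read a permutation as a sequence and look at its windows of three consecutive entries. A
permutation of the first kind is monotone on every odd window, and its only turning points that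
the second kind forbids are peaks at even windows. Each such peak is pushed into the next odd
window by swapping the two entries to its right (at the right end, where that would destroy the
peak, by swapping it with its left neighbour instead). Two even peaks are at least four apart, so
these transpositions are disjoint and the result has odd peaks and even valleys only. Reading the
result from right to left recovers the even peaks one by one, so the surgery is injective. It
misses `3 1 2 0 4 5 …`: its peak could only come from an even peak at the first window, and
undoing that swap gives `3 2 1 0 4 …`, which has none.
-/

namespace PeakValley

section Sequences

variable {α : Type*} [LinearOrder α] (u : ℕ → α) (n : ℕ)

/-- A peak of the window `u p, u (p + 1), u (p + 2)`; for a permutation this is a peak at the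
position `p + 2` of `IsPeak`, which has the parity of `p`. -/
def PeakAt (p : ℕ) : Prop := u p < u (p + 1) ∧ u (p + 2) < u (p + 1)

def ValleyAt (p : ℕ) : Prop := u (p + 1) < u p ∧ u (p + 1) < u (p + 2)

def MonotoneOnOddWindows : Prop :=
  ∀ p, Odd p → p + 3 ≤ n → (u p < u (p + 1) ↔ u (p + 1) < u (p + 2))

def OddPeaksEvenValleys : Prop :=
  ∀ p, p + 3 ≤ n → (PeakAt u p → Odd p) ∧ (ValleyAt u p → Even p)

def IsEvenPeak (p : ℕ) : Prop := Even p ∧ p + 3 ≤ n ∧ PeakAt u p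

/-- The even peak at `p` is moved by transposing the entries at `swapStart n p` and
`swapStart n p + 1`; `partner u n q` is the position whose entry the surgery puts at `q`. -/
def swapStart (p : ℕ) : ℕ := if p + 4 ≤ n then p + 1 else p

open Classical in
noncomputable def partner (q : ℕ) : ℕ :=
  if ∃ p, IsEvenPeak u n p ∧ swapStart n p = q then q + 1
  else if ∃ p, IsEvenPeak u n p ∧ swapStart n p + 1 = q then q - 1
  else q

variable {u n}

lemma monotoneOnOddWindows_of_injective (hu : Function.Injective u)
    (h : ∀ p, Odd p → p + 3 ≤ n → ¬PeakAt u p ∧ ¬ValleyAt u p) :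
    MonotoneOnOddWindows u n := by
  intro p hp hpn
  obtain ⟨hpeak, hvalley⟩ := h p hp hpn
  have h₁ : u p ≠ u (p + 1) := hu.ne (by omega)
  have h₂ : u (p + 1) ≠ u (p + 2) := hu.ne (by omega)
  simp only [PeakAt, ValleyAt, not_and, not_lt] at hpeak hvalley
  constructor
  · intro h; exact lt_of_le_of_ne (hpeak h) h₂
  · intro h; exact lt_of_le_of_ne (not_lt.mp fun h' => (hvalley h').not_gt h) h₁

lemma MonotoneOnOddWindows.le_iff_le (hu : MonotoneOnOddWindows u n) {p : ℕ} (hp : Odd p)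
    (hpn : p + 3 ≤ n) : u (p + 1) ≤ u p ↔ u (p + 2) ≤ u (p + 1) := by
  simpa only [not_lt] using (hu p hp hpn).not

lemma swapStart_of_le {p : ℕ} (h : p + 4 ≤ n) : swapStart n p = p + 1 := if_pos h

lemma swapStart_of_eq {p : ℕ} (h : p + 3 = n) : swapStart n p = p := if_neg (by omega)

lemma IsEvenPeak.not_isEvenPeak_add_two (hu : MonotoneOnOddWindows u n) {p : ℕ}
    (hp : IsEvenPeak u n p) : ¬IsEvenPeak u n (p + 2) := by
  rintro ⟨-, hn, hrise, -⟩
  have := (hu (p + 1) (hp.1.add_one) (by omega)).mpr hrise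
  exact hp.2.2.2.not_gt this

lemma IsEvenPeak.add_four_le (hu : MonotoneOnOddWindows u n) {p q : ℕ} (hp : IsEvenPeak u n p)
    (hq : IsEvenPeak u n q) (hpq : p < q) : p + 4 ≤ q := by
  obtain ⟨k, rfl⟩ := hp.1
  obtain ⟨l, rfl⟩ := hq.1
  have : l + l ≠ k + k + 2 := fun h => hp.not_isEvenPeak_add_two hu (h ▸ hq)
  omega

lemma IsEvenPeak.swapStart_add_two_le {p : ℕ} (hp : IsEvenPeak u n p) :
    swapStart n p + 2 ≤ n := by
  have := hp.2.1
  unfold swapStart; split_ifs <;> omega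

lemma IsEvenPeak.swapStart_add_one_ne (hu : MonotoneOnOddWindows u n) {p q : ℕ}
    (hp : IsEvenPeak u n p) (hq : IsEvenPeak u n q) : swapStart n p + 1 ≠ swapStart n q := by
  unfold swapStart
  rcases lt_trichotomy p q with h | rfl | h
  · have := hp.add_four_le hu hq h; split_ifs <;> omega
  · omega
  · have := hq.add_four_le hu hp h; split_ifs <;> omega

lemma partner_swapStart {p : ℕ} (hp : IsEvenPeak u n p) :
    partner u n (swapStart n p) = swapStart n p + 1 :=
  if_pos ⟨p, hp, rfl⟩

lemma partner_swapStart_add_one (hu : MonotoneOnOddWindows u n) {p : ℕ} (hp : IsEvenPeak u n p) :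
    partner u n (swapStart n p + 1) = swapStart n p := by
  rw [partner, if_neg, if_pos ⟨p, hp, rfl⟩, Nat.add_sub_cancel]
  rintro ⟨q, hq, hqp⟩
  exact hp.swapStart_add_one_ne hu hq hqp.symm

lemma partner_eq_self {x : ℕ}
    (h : ∀ p, IsEvenPeak u n p → swapStart n p ≠ x ∧ swapStart n p + 1 ≠ x) :
    partner u n x = x := by
  rw [partner, if_neg, if_neg]
  · rintro ⟨p, hp, hpx⟩; exact (h p hp).2 hpx
  · rintro ⟨p, hp, hpx⟩; exact (h p hp).1 hpx

lemma partner_partner (hu : MonotoneOnOddWindows u n) (x : ℕ) :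
    partner u n (partner u n x) = x := by
  by_cases h₁ : ∃ p, IsEvenPeak u n p ∧ swapStart n p = x
  · obtain ⟨p, hp, rfl⟩ := h₁
    rw [partner_swapStart hp, partner_swapStart_add_one hu hp]
  by_cases h₂ : ∃ p, IsEvenPeak u n p ∧ swapStart n p + 1 = x
  · obtain ⟨p, hp, rfl⟩ := h₂
    rw [partner_swapStart_add_one hu hp, partner_swapStart hp]
  have hx : partner u n x = x := by rw [partner, if_neg h₁, if_neg h₂]
  rw [hx, hx]

lemma partner_of_le {x : ℕ} (hx : n ≤ x) : partner u n x = x :=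
  partner_eq_self fun _ hp => by have := hp.swapStart_add_two_le; omega

lemma partner_lt (hu : MonotoneOnOddWindows u n) {x : ℕ} (hx : x < n) : partner u n x < n := by
  by_contra! h
  have := partner_partner hu x
  rw [partner_of_le h] at this
  omega

lemma partner_add_one_eq_self {y : ℕ} (hy : Even y) (h : ¬IsEvenPeak u n y) :
    partner u n (y + 1) = y + 1 := by
  refine partner_eq_self fun p hp => ?_
  have hne : p ≠ y := by rintro rfl; exact h hp
  obtain ⟨k, rfl⟩ := hp.1
  obtain ⟨l, rfl⟩ := hy
  unfold swapStart; split_ifs <;> omega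

lemma partner_eq_self_of_even {x : ℕ} (hx : Even x)
    (h₁ : ∀ p, p + 2 = x → ¬IsEvenPeak u n p) (h₂ : x + 3 = n → ¬IsEvenPeak u n x) :
    partner u n x = x := by
  refine partner_eq_self fun p hp => ?_
  have hp₁ : p + 2 ≠ x := fun hpx => h₁ p hpx hp
  have hp₂ : p + 3 = n → p ≠ x := by rintro hpn rfl; exact h₂ hpn hp
  have := hp.2.1
  obtain ⟨k, rfl⟩ := hp.1
  obtain ⟨l, rfl⟩ := hx
  unfold swapStart; split_ifs <;> omega

lemma IsEvenPeak.partner_add_one_of_le {p : ℕ} (hp : IsEvenPeak u n p)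
    (h : p + 4 ≤ n) : partner u n (p + 1) = p + 2 := by
  simpa only [swapStart_of_le h] using partner_swapStart hp

lemma IsEvenPeak.partner_add_two_of_le (hu : MonotoneOnOddWindows u n) {p : ℕ}
    (hp : IsEvenPeak u n p) (h : p + 4 ≤ n) : partner u n (p + 2) = p + 1 := by
  simpa only [swapStart_of_le h] using partner_swapStart_add_one hu hp

lemma IsEvenPeak.partner_of_eq {p : ℕ} (hp : IsEvenPeak u n p) (h : p + 3 = n) :
    partner u n p = p + 1 := by
  simpa only [swapStart_of_eq h] using partner_swapStart hp

lemma IsEvenPeak.partner_add_one_of_eq (hu : MonotoneOnOddWindows u n) {p : ℕ}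
    (hp : IsEvenPeak u n p) (h : p + 3 = n) : partner u n (p + 1) = p := by
  simpa only [swapStart_of_eq h] using partner_swapStart_add_one hu hp

lemma not_peakAt_comp_partner_of_even (hu : MonotoneOnOddWindows u n) {q : ℕ} (hq : Even q)
    (hqn : q + 3 ≤ n) : ¬PeakAt (u ∘ partner u n) q := by
  rintro ⟨hrise, hfall⟩
  simp only [Function.comp_apply] at hrise hfall
  by_cases hpk : IsEvenPeak u n q
  · have ⟨_, _, hpk₁, hpk₂⟩ := hpk
    rcases (show q + 4 ≤ n ∨ q + 3 = n by omega) with hint | hbd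
    · rw [hpk.partner_add_one_of_le hint, hpk.partner_add_two_of_le hu hint] at hfall
      order
    · rw [hpk.partner_of_eq hbd, hpk.partner_add_one_of_eq hu hbd] at hrise
      order
  have h₁ := partner_add_one_eq_self hq hpk
  by_cases hprev : ∃ p, p + 2 = q ∧ IsEvenPeak u n p
  · obtain ⟨p, rfl, hp⟩ := hprev
    have ⟨hpe, _, _, hp₂⟩ := hp
    rw [hp.partner_add_two_of_le hu (by omega), h₁] at hrise
    have := (hu.le_iff_le (p := p + 1) hpe.add_one (by omega)).mp hp₂.le
    order
  by_cases hnext : IsEvenPeak u n (q + 2) ∧ q + 5 = n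
  · obtain ⟨hpk', hbd⟩ := hnext
    have ⟨_, _, hpk'₁, _⟩ := hpk'
    rw [h₁, hpk'.partner_of_eq hbd] at hfall
    have := (hu (q + 1) hq.add_one (by omega)).mpr hpk'₁
    order
  have h₀ := partner_eq_self_of_even hq (fun p hpq hp => hprev ⟨p, hpq, hp⟩) fun _ => hpk
  have h₂ := partner_eq_self_of_even (x := q + 2) (hq.add even_two)
    (fun p hpq hp => hpk (by rwa [show p = q by omega] at hp))
    fun hbd hpk' => hnext ⟨hpk', by omega⟩
  rw [h₀, h₁] at hrise
  rw [h₁, h₂] at hfall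
  exact hpk ⟨hq, hqn, hrise, hfall⟩

lemma not_valleyAt_comp_partner_of_odd (hu : MonotoneOnOddWindows u n) {y : ℕ} (hy : Even y)
    (hyn : y + 4 ≤ n) : ¬ValleyAt (u ∘ partner u n) (y + 1) := by
  rintro ⟨hfall, hrise⟩
  simp only [Function.comp_apply, add_assoc, Nat.reduceAdd] at hfall hrise
  have hmono : u (y + 1) < u (y + 2) ↔ u (y + 2) < u (y + 3) := hu (y + 1) hy.add_one (by omega)
  by_cases hpk : IsEvenPeak u n y
  · have ⟨_, _, _, hpk₂⟩ := hpk
    rw [hpk.partner_add_one_of_le hyn, hpk.partner_add_two_of_le hu hyn] at hfall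
    order
  have h₁ := partner_add_one_eq_self hy hpk
  rw [h₁] at hfall
  by_cases hpk' : IsEvenPeak u n (y + 2)
  · have hpk'₁ : u (y + 2) < u (y + 3) := hpk'.2.2.1
    have := hmono.mpr hpk'₁
    rcases (show y + 6 ≤ n ∨ y + 5 = n by have := hpk'.2.1; omega) with hint | hbd
    · rw [partner_eq_self_of_even (hy.add even_two)
        (fun p hpq hp => hpk (by rwa [show p = y by omega] at hp)) (by omega)] at hfall
      order
    · rw [show partner u n (y + 2) = y + 3 from hpk'.partner_of_eq hbd] at hfall
      order
  rw [partner_eq_self_of_even (hy.add even_two)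
    (fun p hpq hp => hpk (by rwa [show p = y by omega] at hp)) fun _ => hpk'] at hfall hrise
  rw [partner_add_one_eq_self (hy.add even_two) hpk'] at hrise
  exact hfall.not_gt (hmono.mpr hrise)

theorem oddPeaksEvenValleys_comp_partner (hu : MonotoneOnOddWindows u n) :
    OddPeaksEvenValleys (u ∘ partner u n) n := by
  intro q hqn
  rcases Nat.even_or_odd q with hq | ⟨y, rfl⟩
  · exact ⟨fun h => absurd h (not_peakAt_comp_partner_of_even hu hq hqn), fun _ => hq⟩
  · refine ⟨fun _ => odd_two_mul_add_one y, fun h => ?_⟩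
    exact absurd h (not_valleyAt_comp_partner_of_odd hu (even_two_mul y) (by omega))

lemma isEvenPeak_iff_peakAt_comp_partner (hu : MonotoneOnOddWindows u n) {p : ℕ} (hp : Even p)
    (hpn : p + 4 ≤ n) :
    IsEvenPeak u n p ↔ PeakAt (u ∘ partner u n) (p + 1) ∧ ¬IsEvenPeak u n (p + 2) := by
  constructor
  · intro hpk
    have hpk₂ := hpk.not_isEvenPeak_add_two hu
    have h₃ := partner_add_one_eq_self (hp.add even_two) hpk₂
    have hfall : u (p + 2) < u (p + 1) := hpk.2.2.2
    have hmono : u (p + 2) ≤ u (p + 1) → u (p + 3) ≤ u (p + 2) :=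
      (hu.le_iff_le (p := p + 1) hp.add_one (by omega)).mp
    refine ⟨?_, hpk₂⟩
    simp only [PeakAt, Function.comp_apply, add_assoc, Nat.reduceAdd, h₃,
      hpk.partner_add_one_of_le hpn, hpk.partner_add_two_of_le hu hpn]
    exact ⟨hfall, (hmono hfall.le).trans_lt hfall⟩
  · rintro ⟨⟨hrise, hfall⟩, hpk₂⟩
    by_contra hpk
    simp only [Function.comp_apply, add_assoc, Nat.reduceAdd, partner_add_one_eq_self hp hpk,
      partner_add_one_eq_self (hp.add even_two) hpk₂,
      partner_eq_self_of_even (hp.add even_two)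
        (fun q hq h => hpk (by rwa [show q = p by omega] at h)) fun _ => hpk₂] at hrise hfall
    exact hfall.not_gt ((hu (p + 1) hp.add_one (by omega)).mp hrise)

/-- The inequality tells this peak of the image apart from one made by an even peak at `y`. -/
lemma isEvenPeak_add_two_iff_of_add_five_eq (hu : MonotoneOnOddWindows u n) {y : ℕ} (hy : Even y)
    (hyn : y + 5 = n) :
    IsEvenPeak u n (y + 2) ↔
      PeakAt (u ∘ partner u n) (y + 1) ∧
        (u ∘ partner u n) (y + 1) < (u ∘ partner u n) (y + 3) := by
  have hmono : u (y + 1) < u (y + 2) ↔ u (y + 2) < u (y + 3) := hu (y + 1) hy.add_one (by omega)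
  constructor
  · intro hpk
    have h₁ := partner_add_one_eq_self hy fun h => h.not_isEvenPeak_add_two hu hpk
    have h₂ : partner u n (y + 2) = y + 3 := hpk.partner_of_eq (by omega)
    have h₃ : partner u n (y + 3) = y + 2 := hpk.partner_add_one_of_eq hu (by omega)
    have hrise : u (y + 2) < u (y + 3) := hpk.2.2.1
    simp only [PeakAt, Function.comp_apply, add_assoc, Nat.reduceAdd, h₁, h₂, h₃]
    exact ⟨⟨(hmono.mpr hrise).trans hrise, hrise⟩, hmono.mpr hrise⟩
  · rintro ⟨⟨hrise, hfall⟩, hlt⟩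
    by_contra hpk
    simp only [Function.comp_apply, add_assoc, Nat.reduceAdd,
      partner_add_one_eq_self (hy.add even_two) hpk] at hrise hfall hlt
    by_cases hpk₀ : IsEvenPeak u n y
    · have hfall₀ : u (y + 2) < u (y + 1) := hpk₀.2.2.2
      rw [hpk₀.partner_add_one_of_le (by omega)] at hlt
      exact hfall₀.not_gt (hmono.mpr hlt)
    · simp only [partner_add_one_eq_self hy hpk₀, partner_eq_self_of_even (hy.add even_two)
        (fun q hq h => hpk₀ (by rwa [show q = y by omega] at h)) fun _ => hpk] at hrise hfall
      exact hfall.not_gt (hmono.mp hrise)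

theorem isEvenPeak_iff_of_comp_partner_eq {w : ℕ → α} (hu : MonotoneOnOddWindows u n)
    (hw : MonotoneOnOddWindows w n) (hn : 4 ≤ n) (h : u ∘ partner u n = w ∘ partner w n)
    (p : ℕ) : IsEvenPeak u n p ↔ IsEvenPeak w n p := by
  rcases Nat.even_or_odd p with hp | hp
  · rcases lt_trichotomy (p + 3) n with hlt | heq | hgt
    · rw [isEvenPeak_iff_peakAt_comp_partner hu hp (by omega),
        isEvenPeak_iff_peakAt_comp_partner hw hp (by omega), h,
        isEvenPeak_iff_of_comp_partner_eq hu hw hn h (p + 2)]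
    · obtain ⟨y, rfl⟩ : ∃ y, p = y + 2 := ⟨p - 2, by obtain ⟨k, rfl⟩ := hp; omega⟩
      have hy : Even y := by simpa [Nat.even_add] using hp
      rw [isEvenPeak_add_two_iff_of_add_five_eq hu hy (by omega),
        isEvenPeak_add_two_iff_of_add_five_eq hw hy (by omega), h]
    · exact iff_of_false (fun hpk => by have := hpk.2.1; omega)
        fun hpk => by have := hpk.2.1; omega
  · exact iff_of_false (fun hpk => Nat.not_even_iff_odd.mpr hp hpk.1)
      fun hpk => Nat.not_even_iff_odd.mpr hp hpk.1
termination_by n - p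

theorem eq_of_comp_partner_eq {w : ℕ → α} (hu : MonotoneOnOddWindows u n)
    (hw : MonotoneOnOddWindows w n) (hn : 4 ≤ n) (h : u ∘ partner u n = w ∘ partner w n) :
    u = w := by
  have hpeaks : IsEvenPeak u n = IsEvenPeak w n :=
    funext fun p => propext (isEvenPeak_iff_of_comp_partner_eq hu hw hn h p)
  have hpartner : partner u n = partner w n := by
    unfold partner
    rw [hpeaks]
  funext x
  calc u x = (u ∘ partner u n) (partner u n x) := by rw [Function.comp_apply, partner_partner hu]
    _ = w x := by rw [h, hpartner, Function.comp_apply, partner_partner hw]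

lemma lt_of_peakAt_comp_partner_one (hu : MonotoneOnOddWindows u n) (hn : 4 ≤ n)
    (h₁ : PeakAt (u ∘ partner u n) 1) (h₃ : ¬PeakAt (u ∘ partner u n) 3)
    (h₁₃ : (u ∘ partner u n) 3 < (u ∘ partner u n) 1) :
    (u ∘ partner u n) 0 < (u ∘ partner u n) 2 := by
  have hpk₂ : ¬IsEvenPeak u n 2 := by
    intro hpk
    rcases (show n = 5 ∨ 6 ≤ n by have := hpk.2.1; omega) with rfl | h6
    · exact h₁₃.not_gt ((isEvenPeak_add_two_iff_of_add_five_eq hu Even.zero rfl).mp hpk).2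
    · exact h₃ ((isEvenPeak_iff_peakAt_comp_partner hu even_two h6).mp hpk).1
  have hpk₀ := (isEvenPeak_iff_peakAt_comp_partner hu Even.zero hn).mpr ⟨h₁, hpk₂⟩
  have h₀ : partner u n 0 = 0 := partner_eq_self_of_even Even.zero (by omega) (by omega)
  simpa only [Function.comp_apply, h₀, hpk₀.partner_add_two_of_le hu hn] using hpk₀.2.2.1

end Sequences

section Permutations

variable {n : ℕ}

/-- Extended by the identity beyond `n`, so that it stays injective. -/
def toSeq (π : Equiv.Perm (Fin n)) (k : ℕ) : ℕ := if h : k < n then π ⟨k, h⟩ else k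

lemma toSeq_of_lt (π : Equiv.Perm (Fin n)) {k : ℕ} (h : k < n) : toSeq π k = π ⟨k, h⟩ :=
  dif_pos h

lemma toSeq_injective (π : Equiv.Perm (Fin n)) : Function.Injective (toSeq π) := by
  intro k l hkl
  unfold toSeq at hkl
  split_ifs at hkl with hk hl hl
  · simpa using π.injective (Fin.ext hkl)
  · have := (π ⟨k, hk⟩).2; omega
  · have := (π ⟨l, hl⟩).2; omega
  · exact hkl

lemma eq_of_toSeq_eq {π σ : Equiv.Perm (Fin n)} (h : toSeq π = toSeq σ) : π = σ := by
  ext k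
  simpa [toSeq_of_lt _ k.2] using congrFun h k

lemma isPeak_add_two_iff (π : Equiv.Perm (Fin n)) (p : ℕ) :
    IsPeak π (p + 2) ↔ p + 3 ≤ n ∧ PeakAt (toSeq π) p := by
  constructor
  · rintro ⟨⟨_, hpn⟩, h⟩
    refine ⟨hpn, ?_⟩
    rw [PeakAt, toSeq_of_lt π (by omega : p < n), toSeq_of_lt π (by omega : p + 1 < n),
      toSeq_of_lt π (by omega : p + 2 < n)]
    exact h
  · rintro ⟨hpn, h⟩
    refine ⟨⟨by omega, hpn⟩, ?_⟩
    rwa [PeakAt, toSeq_of_lt π (by omega : p < n), toSeq_of_lt π (by omega : p + 1 < n),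
      toSeq_of_lt π (by omega : p + 2 < n)] at h

lemma isValley_add_two_iff (π : Equiv.Perm (Fin n)) (p : ℕ) :
    IsValley π (p + 2) ↔ p + 3 ≤ n ∧ ValleyAt (toSeq π) p := by
  constructor
  · rintro ⟨⟨_, hpn⟩, h⟩
    refine ⟨hpn, ?_⟩
    rw [ValleyAt, toSeq_of_lt π (by omega : p < n), toSeq_of_lt π (by omega : p + 1 < n),
      toSeq_of_lt π (by omega : p + 2 < n)]
    exact h
  · rintro ⟨hpn, h⟩
    refine ⟨⟨by omega, hpn⟩, ?_⟩
    rwa [ValleyAt, toSeq_of_lt π (by omega : p < n), toSeq_of_lt π (by omega : p + 1 < n),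
      toSeq_of_lt π (by omega : p + 2 < n)] at h

lemma forall_isPeak_imp_iff (π : Equiv.Perm (Fin n)) {P : ℕ → Prop} :
    (∀ i, IsPeak π i → P i) ↔ ∀ p, p + 3 ≤ n → PeakAt (toSeq π) p → P (p + 2) := by
  refine ⟨fun h p hpn hp => h _ ((isPeak_add_two_iff π p).mpr ⟨hpn, hp⟩), fun h i hi => ?_⟩
  obtain ⟨p, rfl⟩ : ∃ p, i = p + 2 := ⟨i - 2, by obtain ⟨⟨h2, -⟩, -⟩ := hi; omega⟩
  exact h p ((isPeak_add_two_iff π p).mp hi).1 ((isPeak_add_two_iff π p).mp hi).2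

lemma forall_isValley_imp_iff (π : Equiv.Perm (Fin n)) {P : ℕ → Prop} :
    (∀ i, IsValley π i → P i) ↔
      ∀ p, p + 3 ≤ n → ValleyAt (toSeq π) p → P (p + 2) := by
  refine ⟨fun h p hpn hp => h _ ((isValley_add_two_iff π p).mpr ⟨hpn, hp⟩),
    fun h i hi => ?_⟩
  obtain ⟨p, rfl⟩ : ∃ p, i = p + 2 := ⟨i - 2, by obtain ⟨⟨h2, -⟩, -⟩ := hi; omega⟩
  exact h p ((isValley_add_two_iff π p).mp hi).1 ((isValley_add_two_iff π p).mp hi).2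

lemma monotoneOnOddWindows_toSeq {π : Equiv.Perm (Fin n)}
    (h : (∀ i, IsPeak π i → Even i) ∧ (∀ i, IsValley π i → Even i)) :
    MonotoneOnOddWindows (toSeq π) n := by
  rw [forall_isPeak_imp_iff, forall_isValley_imp_iff] at h
  refine monotoneOnOddWindows_of_injective (toSeq_injective π) fun p hp hpn => ?_
  have hp' : ¬Even (p + 2) := by simpa [Nat.even_add] using hp
  exact ⟨fun hpeak => hp' (h.1 p hpn hpeak), fun hvalley => hp' (h.2 p hpn hvalley)⟩

lemma oddPeaks_evenValleys_of_toSeq {π : Equiv.Perm (Fin n)}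
    (h : OddPeaksEvenValleys (toSeq π) n) :
    (∀ i, IsPeak π i → Odd i) ∧ (∀ i, IsValley π i → Even i) := by
  rw [forall_isPeak_imp_iff, forall_isValley_imp_iff]
  exact ⟨fun p hpn hp => (h p hpn).1 hp |>.add_even even_two,
    fun p hpn hp => (h p hpn).2 hp |>.add even_two⟩

noncomputable def surgery (π : Equiv.Perm (Fin n)) (hπ : MonotoneOnOddWindows (toSeq π) n) :
    Equiv.Perm (Fin n) :=
  (Function.Involutive.toPerm (fun x : Fin n => ⟨partner (toSeq π) n x, partner_lt hπ x.2⟩)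
    fun x => Fin.ext (partner_partner hπ x)).trans π

lemma toSeq_surgery {π : Equiv.Perm (Fin n)} (hπ : MonotoneOnOddWindows (toSeq π) n) :
    toSeq (surgery π hπ) = toSeq π ∘ partner (toSeq π) n := by
  funext k
  by_cases hk : k < n
  · rw [Function.comp_apply, toSeq_of_lt _ hk, toSeq_of_lt _ (partner_lt hπ hk)]
    rfl
  · simp [toSeq, hk, partner_of_le (not_lt.mp hk)]

lemma toSeq_swap_zero_three (hn : 4 ≤ n) (k : ℕ) :
    toSeq (Equiv.swap (⟨0, by omega⟩ : Fin n) ⟨3, by omega⟩) k =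
      if k = 0 then 3 else if k = 3 then 0 else k := by
  unfold toSeq
  split_ifs <;> simp_all [Equiv.swap_apply_def, Fin.ext_iff]
  omega

lemma oddPeaksEvenValleys_swap_zero_three (hn : 4 ≤ n) :
    OddPeaksEvenValleys (toSeq (Equiv.swap (⟨0, by omega⟩ : Fin n) ⟨3, by omega⟩)) n := by
  intro p _
  simp only [PeakAt, ValleyAt, toSeq_swap_zero_three hn, Nat.odd_iff, Nat.even_iff]
  constructor <;> intro h <;> split_ifs at h <;> omega

noncomputable def surgeryMap
    (π : {π : Equiv.Perm (Fin n) //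
      (∀ i, IsPeak π i → Even i) ∧ (∀ i, IsValley π i → Even i)}) :
    {π : Equiv.Perm (Fin n) //
      (∀ i, IsPeak π i → Odd i) ∧ (∀ i, IsValley π i → Even i)} :=
  ⟨surgery π.1 (monotoneOnOddWindows_toSeq π.2), oddPeaks_evenValleys_of_toSeq <| by
    rw [toSeq_surgery]; exact oddPeaksEvenValleys_comp_partner (monotoneOnOddWindows_toSeq π.2)⟩

lemma surgeryMap_injective (hn : 4 ≤ n) : Function.Injective (surgeryMap (n := n)) := by
  intro π σ h
  have := congrArg (toSeq ∘ Subtype.val) h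
  simp only [Function.comp_apply, surgeryMap, toSeq_surgery] at this
  exact Subtype.ext (eq_of_toSeq_eq (eq_of_comp_partner_eq (monotoneOnOddWindows_toSeq π.2)
    (monotoneOnOddWindows_toSeq σ.2) hn this))

lemma swap_zero_three_notMem_range_surgeryMap (hn : 4 ≤ n) :
    ⟨Equiv.swap ⟨0, by omega⟩ ⟨3, by omega⟩,
      oddPeaks_evenValleys_of_toSeq (oddPeaksEvenValleys_swap_zero_three hn)⟩ ∉
      Set.range (surgeryMap (n := n)) := by
  rintro ⟨π, h⟩
  have hv := toSeq_swap_zero_three hn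
  have h' := congrArg Subtype.val h
  simp only [surgeryMap] at h'
  rw [← h', toSeq_surgery] at hv
  have := lt_of_peakAt_comp_partner_one (monotoneOnOddWindows_toSeq π.2) hn
  simp only [PeakAt, hv] at this
  norm_num at this

end Permutations

end PeakValley

theorem stmt7 (n : ℕ) (hn : 4 ≤ n) :
    Nat.card {π : Equiv.Perm (Fin n) //
        (∀ i, IsPeak π i → Even i) ∧ (∀ i, IsValley π i → Even i)} <
    Nat.card {π : Equiv.Perm (Fin n) //
        (∀ i, IsPeak π i → Odd i) ∧ (∀ i, IsValley π i → Even i)} := by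
  classical
  rw [Nat.card_eq_fintype_card, Nat.card_eq_fintype_card]
  exact Fintype.card_lt_of_injective_of_notMem _ (PeakValley.surgeryMap_injective hn)
    (PeakValley.swap_zero_three_notMem_range_surgeryMap hn)
end

section
/- For every permutation π of [n] with n ≥ 1, the number of up-down runs of π equals the length of the longest alternating subsequence of π. -/
/-- Positions `a..b` (1-indexed, `a < b`) form a birun of `π`: a maximal consecutive
subsequence of length at least two that is strictly increasing or strictly decreasing. -/
def IsBirun {n : ℕ} (π : Equiv.Perm (Fin n)) (a b : ℕ) : Prop :=
  ∃ h : 1 ≤ a ∧ a < b ∧ b ≤ n,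
    (((∀ i, ∀ _ : a ≤ i ∧ i < b, π ⟨i - 1, by omega⟩ < π ⟨i, by omega⟩) ∧
      (a = 1 ∨ ∃ _ : 2 ≤ a, ¬ π ⟨a - 2, by omega⟩ < π ⟨a - 1, by omega⟩) ∧
      (b = n ∨ ∃ _ : b + 1 ≤ n, ¬ π ⟨b - 1, by omega⟩ < π ⟨b, by omega⟩)) ∨
     ((∀ i, ∀ _ : a ≤ i ∧ i < b, π ⟨i, by omega⟩ < π ⟨i - 1, by omega⟩) ∧
      (a = 1 ∨ ∃ _ : 2 ≤ a, ¬ π ⟨a - 1, by omega⟩ < π ⟨a - 2, by omega⟩) ∧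
      (b = n ∨ ∃ _ : b + 1 ≤ n, ¬ π ⟨b, by omega⟩ < π ⟨b - 1, by omega⟩)))

/-- Positions `a..b` form an up-down run of `π`: either a birun, or the initial run of
length one (the single first letter, when `n = 1` or `π(1) > π(2)`). -/
def IsUpDownRun {n : ℕ} (π : Equiv.Perm (Fin n)) (a b : ℕ) : Prop :=
  IsBirun π a b ∨
    (a = 1 ∧ b = 1 ∧ (n = 1 ∨ ∃ _ : 2 ≤ n, π ⟨1, by omega⟩ < π ⟨0, by omega⟩))



/-!
Record whether each letter of `π` is smaller than the previous one, declaring the first letter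
an ascent (as if `π` were preceded by `-∞`; the initial run of length one is then the ascending
run `-∞ π(1)`). The up-down runs are the maximal blocks on which this indicator is constant, so
there is one more of them than there are turns, i.e. changes of the indicator. The indicator at
a position is the parity of the number of turns up to it, so two consecutive terms of an
alternating subsequence are always separated by a turn, which bounds its length; conversely, the
last letters of the runs form an alternating subsequence.
-/

open Finset

namespace UpDownRun

section Sequence

variable {α : Type*} [LinearOrder α] (f : ℕ → α)

-- `descent f 0 = false`, as `0 - 1 = 0`.
def descent (i : ℕ) : Bool := decide (f i < f (i - 1))

def turns (m : ℕ) : Finset ℕ := {c ∈ Icc 1 m | descent f (c - 1) ≠ descent f c}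

def AlternatesAt (s : ℕ → ℕ) (j : ℕ) : Prop :=
  if j % 2 = 0 then f (s (j + 1)) < f (s j) else f (s j) < f (s (j + 1))

variable {f}

lemma descent_eq_false_iff {n i : ℕ} (hf : Set.InjOn f (Set.Iio n)) (hi : 1 ≤ i) (hin : i < n) :
    descent f i = false ↔ f (i - 1) < f i := by
  rw [descent, decide_eq_false_iff_not, not_lt]
  refine ⟨fun h => h.lt_of_ne fun heq => ?_, le_of_lt⟩
  have := hf (show i - 1 < n by omega) (show i < n from hin) heq
  omega

lemma turns_mono : Monotone (turns f) := fun _ _ h =>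
  filter_subset_filter _ (Icc_subset_Icc_right h)

lemma card_turns_succ (m : ℕ) :
    #(turns f (m + 1)) = #(turns f m) + if descent f m ≠ descent f (m + 1) then 1 else 0 := by
  rw [turns, ← insert_Icc_right_eq_Icc_add_one (by omega), filter_insert, add_tsub_cancel_right]
  split_ifs with h
  · exact card_insert_of_notMem (by simp)
  · rfl

lemma descent_eq_decide_odd (i : ℕ) : descent f i = decide (Odd #(turns f i)) := by
  induction i with
  | zero => simp [descent, turns]
  | succ m ih =>
    rw [card_turns_succ]
    by_cases h : descent f m = descent f (m + 1)
    · simp [← h, ih]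
    · simp only [if_pos h, Nat.odd_add_one, decide_not, ← ih]
      exact Bool.eq_not.2 (Ne.symm h)

lemma descent_eq_of_card_turns_le {p q i t : ℕ} (hp : t ≤ #(turns f p)) (hq : #(turns f q) ≤ t)
    (hpi : p ≤ i) (hiq : i ≤ q) : descent f i = decide (Odd t) := by
  have := card_le_card (turns_mono (f := f) hpi)
  have := card_le_card (turns_mono (f := f) hiq)
  rw [descent_eq_decide_odd, show #(turns f i) = t by omega]

lemma le_of_forall_descent_eq_false {p q : ℕ} (hpq : p ≤ q)
    (h : ∀ i, p < i → i ≤ q → descent f i = false) : f p ≤ f q := by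
  induction q, hpq using Nat.le_induction with
  | base => exact le_rfl
  | succ q hpq ih =>
    have hq := h (q + 1) (by omega) le_rfl
    rw [descent, decide_eq_false_iff_not, not_lt, add_tsub_cancel_right] at hq
    exact (ih fun i hi hiq => h i hi (by omega)).trans hq

lemma lt_of_forall_descent_eq_true {p q : ℕ} (hpq : p < q)
    (h : ∀ i, p < i → i ≤ q → descent f i = true) : f q < f p := by
  induction q, hpq using Nat.le_induction with
  | base => simpa [descent] using h (p + 1) (by omega) le_rfl
  | succ q hpq ih =>
    have hq := h (q + 1) (by omega) le_rfl
    rw [descent, decide_eq_true_iff, add_tsub_cancel_right] at hq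
    exact hq.trans (ih fun i hi hiq => h i hi (by omega))

lemma not_alternatesAt_of_forall_descent {s : ℕ → ℕ} {j : ℕ} (hs : s j < s (j + 1))
    (h : ∀ i, s j < i → i ≤ s (j + 1) → descent f i = decide (Odd j)) :
    ¬ AlternatesAt f s j := by
  unfold AlternatesAt
  split_ifs with hj
  · refine (le_of_forall_descent_eq_false hs.le fun i hi hi' => ?_).not_gt
    simpa [h i hi hi', Nat.odd_iff] using hj
  · refine (lt_of_forall_descent_eq_true hs fun i hi hi' => ?_).not_gt
    simpa [h i hi hi', Nat.odd_iff] using hj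

lemma alternatesAt_of_forall_descent {n : ℕ} (hf : Set.InjOn f (Set.Iio n)) {s : ℕ → ℕ} {j : ℕ}
    (hs : s j < s (j + 1)) (hn : s (j + 1) < n)
    (h : ∀ i, s j < i → i ≤ s (j + 1) → descent f i = decide (Odd (j + 1))) :
    AlternatesAt f s j := by
  unfold AlternatesAt
  split_ifs with hj
  · refine lt_of_forall_descent_eq_true hs fun i hi hi' => ?_
    simpa [h i hi hi', Nat.odd_add_one, Nat.odd_iff] using hj
  · refine (le_of_forall_descent_eq_false hs.le fun i hi hi' => ?_).lt_of_ne fun heq => ?_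
    · simpa [h i hi hi', Nat.odd_add_one, Nat.odd_iff] using hj
    · exact hs.ne (hf (show s j < n by omega) (show s (j + 1) < n from hn) heq)

lemma le_card_turns_of_alternatesAt {k : ℕ} {s : ℕ → ℕ} (hs : ∀ j, j + 1 < k → s j < s (j + 1))
    (halt : ∀ j, j + 1 < k → AlternatesAt f s j) {j : ℕ} (hj : j < k) :
    j ≤ #(turns f (s j)) := by
  induction j with
  | zero => exact Nat.zero_le _
  | succ j ih =>
    by_contra! hlt
    refine not_alternatesAt_of_forall_descent (hs j hj) (fun i hi hi' => ?_) (halt j hj)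
    exact descent_eq_of_card_turns_le (ih (by omega)) (by omega) hi.le hi'

lemma exists_alternatesAt {n : ℕ} (hf : Set.InjOn f (Set.Iio n)) :
    ∃ p : ℕ → ℕ, (∀ j, p j ≤ n - 1) ∧
      ∀ j < #(turns f (n - 1)), p j < p (j + 1) ∧ AlternatesAt f p j := by
  -- `p j` is the last position of the `(j + 1)`-st run: the last one with at most `j` turns.
  set p : ℕ → ℕ := fun j => Nat.findGreatest (fun i => #(turns f i) ≤ j) (n - 1)
  have hp : ∀ j, #(turns f (p j)) ≤ j := fun j =>
    Nat.findGreatest_spec (P := fun i => #(turns f i) ≤ j) (m := 0) (Nat.zero_le _) (by simp [turns])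
  refine ⟨p, fun j => Nat.findGreatest_le _, fun j hj => ?_⟩
  have hpn : p j < n - 1 := by
    by_contra hpn
    have : p j = n - 1 := le_antisymm (Nat.findGreatest_le _) (by omega)
    exact (hp j).not_gt (this ▸ hj)
  have hnext : j < #(turns f (p j + 1)) :=
    not_le.mp (Nat.findGreatest_is_greatest (P := fun i => #(turns f i) ≤ j) (Nat.lt_succ_self (p j)) hpn)
  have hsucc : p j + 1 ≤ p (j + 1) := by
    refine Nat.le_findGreatest hpn ?_
    have h := card_turns_succ (f := f) (p j)
    have := hp j
    split_ifs at h <;> omega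
  refine ⟨hsucc, alternatesAt_of_forall_descent hf hsucc ?_ fun i hi hi' => ?_⟩
  · have : p (j + 1) ≤ n - 1 := Nat.findGreatest_le _
    omega
  · exact descent_eq_of_card_turns_le hnext (hp (j + 1)) hi hi'

end Sequence

section Permutation

variable {n : ℕ}

-- `seq π (i - 1)` is the letter in the 1-indexed position `i` of `IsBirun` and `IsUpDownRun`.
def seq (π : Equiv.Perm (Fin n)) (i : ℕ) : ℕ := if h : i < n then π ⟨i, h⟩ else 0

variable {π : Equiv.Perm (Fin n)}

lemma seq_of_lt {i : ℕ} (hi : i < n) : seq π i = π ⟨i, hi⟩ := dif_pos hi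

lemma lt_iff_seq_lt {i j : ℕ} (hi : i < n) (hj : j < n) :
    π ⟨i, hi⟩ < π ⟨j, hj⟩ ↔ seq π i < seq π j := by
  rw [seq_of_lt hi, seq_of_lt hj]; rfl

lemma seq_injOn : Set.InjOn (seq π) (Set.Iio n) := by
  intro i hi j hj h
  simp only [Set.mem_Iio] at hi hj
  simpa [seq, hi, hj, Fin.val_inj] using h

lemma isBirun_iff {a b : ℕ} : IsBirun π a b ↔ (1 ≤ a ∧ a < b ∧ b ≤ n) ∧ ∃ d : Bool,
    (∀ i, a ≤ i → i < b → descent (seq π) i = d) ∧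
    (a = 1 ∨ descent (seq π) (a - 1) ≠ d) ∧ (b = n ∨ descent (seq π) b ≠ d) := by
  simp only [IsBirun, lt_iff_seq_lt, exists_prop, and_imp, Bool.exists_bool]
  refine and_congr_right fun ⟨ha, hab, hb⟩ => ?_
  have hasc : ∀ i, 1 ≤ i → i < n → (seq π (i - 1) < seq π i ↔ descent (seq π) i = false) :=
    fun i hi hin => (descent_eq_false_iff seq_injOn hi hin).symm
  have hdesc : ∀ i, seq π i < seq π (i - 1) ↔ descent (seq π) i = true := fun i =>
    decide_eq_true_iff.symm
  have hL : ∀ {P Q : Prop}, (a ≠ 1 → (P ↔ Q)) → (a = 1 ∨ 2 ≤ a ∧ ¬P ↔ a = 1 ∨ ¬Q) := by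
    intro P Q h
    by_cases ha1 : a = 1
    · simp [ha1]
    · simp [ha1, h ha1, show 2 ≤ a by omega]
  have hR : ∀ {P Q : Prop}, (b ≠ n → (P ↔ Q)) → (b = n ∨ b + 1 ≤ n ∧ ¬P ↔ b = n ∨ ¬Q) := by
    intro P Q h
    by_cases hbn : b = n
    · simp [hbn]
    · simp [hbn, h hbn, show b + 1 ≤ n by omega]
  refine or_congr (and_congr ?_ (and_congr ?_ ?_)) (and_congr ?_ (and_congr ?_ ?_))
  · exact forall_congr' fun i => forall₂_congr fun hi hib => hasc i (by omega) (by omega)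
  · exact hL fun ha1 => by rw [show a - 2 = a - 1 - 1 by omega]; exact hasc _ (by omega) (by omega)
  · exact hR fun hbn => hasc b (by omega) (by omega)
  · exact forall_congr' fun i => forall₂_congr fun _ _ => hdesc i
  · exact hL fun ha1 => by rw [show a - 2 = a - 1 - 1 by omega]; exact hdesc _
  · exact hR fun _ => hdesc b

lemma one_le_of_isUpDownRun {a b : ℕ} (h : IsUpDownRun π a b) : 1 ≤ a := by
  rcases h with ⟨⟨ha, -⟩, -⟩ | ⟨rfl, -⟩
  exacts [ha, le_rfl]

lemma mem_insert_turns_of_isUpDownRun {a b : ℕ} (h : IsUpDownRun π a b) :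
    b ∈ insert n (turns (seq π) (n - 1)) := by
  simp only [mem_insert, turns, mem_filter, mem_Icc]
  rcases h with h | ⟨-, rfl, hn | ⟨hn, h⟩⟩
  · obtain ⟨⟨ha, hab, hb⟩, d, hrun, -, hR⟩ := isBirun_iff.1 h
    by_cases hbn : b = n
    · exact Or.inl hbn
    · refine Or.inr ⟨by omega, ?_⟩
      rw [hrun (b - 1) (by omega) (by omega)]
      exact (hR.resolve_left hbn).symm
  · exact Or.inl hn.symm
  · rw [lt_iff_seq_lt] at h
    exact Or.inr ⟨by omega, by simp [descent, h]⟩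

lemma eq_of_isUpDownRun {a a' b : ℕ} (h : IsUpDownRun π a b) (h' : IsUpDownRun π a' b) :
    a = a' := by
  have key : ∀ {a a'}, IsUpDownRun π a b → IsUpDownRun π a' b → ¬ a < a' := by
    intro a a' h h' haa
    rcases h' with h' | ⟨rfl, -⟩
    · obtain ⟨⟨ha', hab', -⟩, d', hrun', hL', -⟩ := isBirun_iff.1 h'
      rcases h with h | ⟨-, rfl, -⟩
      · obtain ⟨⟨ha, -⟩, d, hrun, -⟩ := isBirun_iff.1 h
        have hd : d = d' := (hrun a' haa.le hab').symm.trans (hrun' a' le_rfl hab')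
        exact hL'.elim (by omega) fun hne => hne (hd ▸ hrun (a' - 1) (by omega) (by omega))
      · omega
    · have := one_le_of_isUpDownRun h
      omega
  exact le_antisymm (not_lt.1 (key h' h)) (not_lt.1 (key h h'))

lemma exists_isUpDownRun (hn : 1 ≤ n) {b : ℕ} (hb : b ∈ insert n (turns (seq π) (n - 1))) :
    ∃ a, IsUpDownRun π a b := by
  simp only [mem_insert, turns, mem_filter, mem_Icc] at hb
  have hb1 : 1 ≤ b := by omega
  obtain rfl | hb2 := hb1.eq_or_lt
  · refine ⟨1, Or.inr ⟨rfl, rfl, hb.imp Eq.symm fun h => ⟨by omega, ?_⟩⟩⟩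
    rw [lt_iff_seq_lt]
    simpa [descent] using h.2
  set P : ℕ → Prop := fun a => a = 1 ∨ descent (seq π) (a - 1) ≠ descent (seq π) a
  set a := Nat.findGreatest P (b - 1)
  have hL : P a := Nat.findGreatest_spec (m := 1) (by omega) (Or.inl rfl)
  have ha : 1 ≤ a := Nat.le_findGreatest (by omega) (Or.inl rfl)
  have hab : a < b := by have : a ≤ b - 1 := Nat.findGreatest_le _; omega
  have hrun : ∀ i, a ≤ i → i < b → descent (seq π) i = descent (seq π) a := by
    intro i hai hib
    induction i, hai using Nat.le_induction with
    | base => rfl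
    | succ i hai ih =>
      have := Nat.findGreatest_is_greatest (P := P) (n := b - 1) (k := i + 1) (by omega) (by omega)
      simp only [P, not_or, ne_eq, not_not, add_tsub_cancel_right] at this
      rw [← this.2, ih (by omega)]
  refine ⟨a, Or.inl (isBirun_iff.2 ⟨⟨ha, hab, by omega⟩, descent (seq π) a, hrun, hL, ?_⟩)⟩
  refine hb.imp_right fun h => ?_
  rw [← hrun (b - 1) (by omega) (by omega)]
  exact h.2.symm

lemma card_isUpDownRun (hn : 1 ≤ n) :
    Nat.card {p : ℕ × ℕ // IsUpDownRun π p.1 p.2} = #(turns (seq π) (n - 1)) + 1 := by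
  rw [← card_insert_of_notMem (a := n) (by simp [turns]; omega), ← Nat.card_eq_finsetCard]
  refine Nat.card_eq_of_bijective (fun p => ⟨p.1.2, mem_insert_turns_of_isUpDownRun p.2⟩) ⟨?_, ?_⟩
  · rintro ⟨⟨a, b⟩, h⟩ ⟨⟨a', b'⟩, h'⟩ hbb
    obtain rfl : b = b' := congrArg Subtype.val hbb
    obtain rfl := eq_of_isUpDownRun h h'
    rfl
  · rintro ⟨b, hb⟩
    obtain ⟨a, ha⟩ := exists_isUpDownRun hn hb
    exact ⟨⟨(a, b), ha⟩, rfl⟩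

lemma le_card_turns_add_one {k : ℕ} (s : Fin k → Fin n) (hs : StrictMono s)
    (halt : ∀ (j : ℕ) (hj : j + 1 < k),
      if j % 2 = 0 then π (s ⟨j + 1, hj⟩) < π (s ⟨j, by omega⟩)
      else π (s ⟨j, by omega⟩) < π (s ⟨j + 1, hj⟩)) :
    k ≤ #(turns (seq π) (n - 1)) + 1 := by
  obtain _ | k := k
  · omega
  set t : ℕ → ℕ := fun j => if h : j < k + 1 then s ⟨j, h⟩ else 0
  have ht : ∀ j (h : j < k + 1), t j = s ⟨j, h⟩ := fun j h => dif_pos h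
  have hk : k ≤ #(turns (seq π) (t k)) := by
    refine le_card_turns_of_alternatesAt (k := k + 1) (fun j hj => ?_) (fun j hj => ?_) (lt_add_one k)
    · rw [ht j (by omega), ht (j + 1) hj]
      exact hs (Fin.mk_lt_mk.2 (lt_add_one j))
    · unfold AlternatesAt
      rw [ht j (by omega), ht (j + 1) hj, seq_of_lt (s _).2, seq_of_lt (s _).2]
      exact halt j hj
  have htn : t k ≤ n - 1 := by rw [ht k (lt_add_one k)]; omega
  have := card_le_card (turns_mono (f := seq π) htn)
  omega

lemma exists_alternating (hn : 1 ≤ n) :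
    ∃ s : Fin (#(turns (seq π) (n - 1)) + 1) → Fin n, StrictMono s ∧
      ∀ (j : ℕ) (hj : j + 1 < #(turns (seq π) (n - 1)) + 1),
        if j % 2 = 0 then π (s ⟨j + 1, hj⟩) < π (s ⟨j, by omega⟩)
        else π (s ⟨j, by omega⟩) < π (s ⟨j + 1, hj⟩) := by
  obtain ⟨p, hpn, hp⟩ := exists_alternatesAt (seq_injOn (π := π))
  have hpn' : ∀ j, p j < n := fun j => by have := hpn j; omega
  refine ⟨fun j => ⟨p j, hpn' j⟩, Fin.strictMono_iff_lt_succ.2 fun j => (hp j j.2).1,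
    fun j hj => ?_⟩
  have := (hp j (by omega)).2
  rwa [AlternatesAt, seq_of_lt (hpn' j), seq_of_lt (hpn' (j + 1))] at this

end Permutation

end UpDownRun

theorem stmt11 (n : ℕ) (hn : 1 ≤ n) (π : Equiv.Perm (Fin n)) :
    Nat.card {p : ℕ × ℕ // IsUpDownRun π p.1 p.2} =
      sSup {k : ℕ | ∃ s : Fin k → Fin n, StrictMono s ∧
        ∀ (j : ℕ) (hj : j + 1 < k),
          if j % 2 = 0 then π (s ⟨j + 1, hj⟩) < π (s ⟨j, by omega⟩)
          else π (s ⟨j, by omega⟩) < π (s ⟨j + 1, hj⟩)} := by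
  rw [UpDownRun.card_isUpDownRun hn]
  refine (IsGreatest.csSup_eq ⟨?_, ?_⟩).symm
  · exact UpDownRun.exists_alternating hn
  · rintro k ⟨s, hs, halt⟩
    exact UpDownRun.le_card_turns_add_one s hs halt
end
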